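/- arXiv:2012.11063 — 2 statements merged into one kernel-verified Lean document; each statement's English description precedes it below -/
import Mathlib

section
/- Let x, y be complex numbers with Re x < 0 and 0 < Re y < 1. Then −x Σ_{m≥0} ( (−y/2)ₘ ((1−x−y)/2)ₘ / (m! ((1−x)/2)ₘ) ) · Γ(2m−x) Γ(1−y) / Γ(2m+1−x−y) = ( Γ(1−x) Γ(1−y) / Γ(1−x−y) ) · Σ_{m≥0} ( (−y/2)ₘ (−x/2)ₘ / (m! (1−(x+y)/2)ₘ) ), and this common value equals ( Γ(1−x) Γ(1−y) / Γ(1−x−y) ) · ( Γ(1−(x+y)/2) / ( Γ(1−x/2) Γ(1−y/2) ) ). -/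
/-! The duplication `Γ(z + 2m) = 4^m (z/2)ₘ ((z+1)/2)ₘ Γ(z)` turns the `m`-th summand into
`Γ(-x) Γ(1-y) / Γ(1-x-y)` times the `m`-th term of `F(-y/2, -x/2; 1 - (x+y)/2; 1)`, whose
lower parameter is `a + b + 1` for `a = -y/2`, `b = -x/2`. For `c = a + b + 1` the partial sums of
`F(a, b; c; 1)` telescope to `(a+1)_N (b+1)_N / (N! (c)_N)`, and writing each Pochhammer symbol
through Euler's sequence `GammaSeq` shows that this tends to `Γ(c) / (Γ(a+1) Γ(b+1))`. The terms
are `O(1/m²)`, so the series converges absolutely. -/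

open Complex Filter Metric Finset

attribute [local instance] Classical.propDecidable

noncomputable section

/-- Condition on the summation variables of the level-two multiple polylogarithm:
`m` is strictly increasing, `m i ≡ i+1 (mod 2)` (so `m 0` is odd, `m 1` even, ...),
and all `m i` are positive. -/
def athCond (n : ℕ) (m : Fin n → ℕ) : Prop :=
  StrictMono m ∧ ∀ i : Fin n, m i % 2 = ((i : ℕ) + 1) % 2 ∧ 0 < m i

/-- The last entry `m n` of the summation sequence (junk value `0` for depth `0`). -/
def lastExp {n : ℕ} (m : Fin n → ℕ) : ℕ :=
  if h : 0 < n then m ⟨n - 1, Nat.sub_lt h Nat.one_pos⟩ else 0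

/-- The level-two multiple polylogarithm
`Ath(𝐤; t) = Σ_{0<m₁<⋯<mₙ, mᵢ ≡ i (2)} t^{mₙ}/(m₁^{k₁}⋯mₙ^{kₙ})`, with `Ath(∅;t) = 1`. -/
def Ath {n : ℕ} (k : Fin n → ℕ) (t : ℂ) : ℂ :=
  ∑' m : Fin n → ℕ,
    if athCond n m then t ^ lastExp m / ∏ i, ((m i : ℂ) ^ k i) else 0

/-- The multiple T-value `T(𝐤) = 2^n Σ_{0<m₁<⋯<mₙ, mᵢ ≡ i (2)} 1/(m₁^{k₁}⋯mₙ^{kₙ})`. -/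
def Tval {n : ℕ} (k : Fin n → ℕ) : ℝ :=
  2 ^ n * ∑' m : Fin n → ℕ,
    if athCond n m then (∏ i, ((m i : ℝ) ^ k i))⁻¹ else 0

/-- `κ` is an index of weight `k`, depth `n` and height `s`. -/
def IdxCond (k n s : ℕ) (κ : Fin n → ℕ) : Prop :=
  (∀ i, 1 ≤ κ i) ∧ (∑ i, κ i) = k ∧ (Finset.univ.filter fun i => 2 ≤ κ i).card = s

/-- `κ` is an admissible index of weight `k`, depth `n` and height `s`. -/
def IdxCond0 (k n s : ℕ) (κ : Fin n → ℕ) : Prop :=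
  IdxCond k n s κ ∧ ∀ h : 0 < n, 2 ≤ κ ⟨n - 1, Nat.sub_lt h Nat.one_pos⟩

/-- `G(k,n,s;t) = 2^n Σ_{𝐤 ∈ I(k,n,s)} Ath(𝐤;t)`. -/
def G (k n s : ℕ) (t : ℂ) : ℂ :=
  2 ^ n * ∑' κ : Fin n → ℕ, if IdxCond k n s κ then Ath κ t else 0

/-- `G₀(k,n,s;t) = 2^n Σ_{𝐤 ∈ I₀(k,n,s)} Ath(𝐤;t)`. -/
def G0 (k n s : ℕ) (t : ℂ) : ℂ :=
  2 ^ n * ∑' κ : Fin n → ℕ, if IdxCond0 k n s κ then Ath κ t else 0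

/-- `Σ_{𝐤 ∈ I₀(k,n,s)} T(𝐤)`. -/
def sumT0 (k n s : ℕ) : ℝ :=
  ∑' κ : Fin n → ℕ, if IdxCond0 k n s κ then Tval κ else 0

/-- One term of the generating function `Φ`. -/
def PhiTerm (x y z : ℂ) (p : ℕ × ℕ × ℕ) (t : ℂ) : ℂ :=
  if 1 ≤ p.1 ∧ 1 ≤ p.2.1 then
    G p.1 p.2.1 p.2.2 t * x ^ (p.1 - p.2.1 - p.2.2) * y ^ (p.2.1 - p.2.2) * z ^ (2 * p.2.2)
  else 0

/-- `Φ(x,y,z;t) = 1 + Σ_{k,n≥1, s≥0} G(k,n,s;t) x^{k−n−s} y^{n−s} z^{2s}`. -/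
def Phi (x y z t : ℂ) : ℂ := 1 + ∑' p : ℕ × ℕ × ℕ, PhiTerm x y z p t

/-- One term of the generating function `Φ₀`. -/
def Phi0Term (x y z : ℂ) (p : ℕ × ℕ × ℕ) (t : ℂ) : ℂ :=
  if 1 ≤ p.1 ∧ 1 ≤ p.2.1 ∧ 1 ≤ p.2.2 then
    G0 p.1 p.2.1 p.2.2 t * x ^ (p.1 - p.2.1 - p.2.2) * y ^ (p.2.1 - p.2.2)
      * z ^ (2 * (p.2.2 - 1))
  else 0

/-- `Φ₀(x,y,z;t) = Σ_{k,n,s≥1} G₀(k,n,s;t) x^{k−n−s} y^{n−s} z^{2(s−1)}`. -/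
def Phi0 (x y z t : ℂ) : ℂ := ∑' p : ℕ × ℕ × ℕ, Phi0Term x y z p t

/-- The shifted factorial `(a)ₙ = a(a+1)⋯(a+n−1)`. -/
def poch (a : ℂ) (n : ℕ) : ℂ := ∏ j ∈ Finset.range n, (a + j)

/-- The Gauss hypergeometric series `F(a,b,c;t)`. -/
def hypF (a b c t : ℂ) : ℂ :=
  ∑' n : ℕ, poch a n * poch b n / ((n.factorial : ℂ) * poch c n) * t ^ n

lemma poch_succ_right (a : ℂ) (n : ℕ) : poch a (n + 1) = poch a n * (a + n) :=
  prod_range_succ _ _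

lemma poch_succ_left (a : ℂ) (n : ℕ) : poch a (n + 1) = a * poch (a + 1) n := by
  simp only [poch, prod_range_succ', Nat.cast_add, Nat.cast_one, Nat.cast_zero, add_zero]
  rw [mul_comm]
  congr 1
  exact prod_congr rfl fun j _ => by ring

lemma poch_eq_ascPochhammer_eval (a : ℂ) (n : ℕ) : poch a n = (ascPochhammer ℂ n).eval a := by
  induction n with
  | zero => simp [poch]
  | succ n ih => rw [poch_succ_right, ih, ascPochhammer_succ_eval]

lemma poch_ne_zero {a : ℂ} (ha : ∀ k : ℕ, a ≠ -k) (n : ℕ) : poch a n ≠ 0 := by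
  rw [poch_eq_ascPochhammer_eval, Ne, ascPochhammer_eval_eq_zero_iff]
  rintro ⟨k, -, hk⟩
  exact ha k (by rw [hk, neg_neg])

lemma Gamma_add_nat_eq_poch_mul {z : ℂ} (hz : ∀ k : ℕ, z ≠ -k) (n : ℕ) :
    Gamma (z + n) = poch z n * Gamma z := by
  rw [poch_eq_ascPochhammer_eval, ← Gamma_add_nat_div_Gamma_eq z hz,
    div_mul_cancel₀ _ (Gamma_ne_zero hz)]

lemma poch_two_mul (a : ℂ) (n : ℕ) :
    poch a (2 * n) = 4 ^ n * poch (a / 2) n * poch ((a + 1) / 2) n := by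
  induction n with
  | zero => simp [poch]
  | succ n ih =>
    rw [show 2 * (n + 1) = 2 * n + 1 + 1 by ring, poch_succ_right, poch_succ_right, ih,
      poch_succ_right (a / 2), poch_succ_right ((a + 1) / 2)]
    push_cast
    ring

lemma Gamma_add_two_mul_nat {z : ℂ} (hz : ∀ k : ℕ, z ≠ -k) (n : ℕ) :
    Gamma (z + 2 * n) = 4 ^ n * poch (z / 2) n * poch ((z + 1) / 2) n * Gamma z := by
  rw [← poch_two_mul, ← Gamma_add_nat_eq_poch_mul hz]
  push_cast
  rfl

lemma add_natCast_ne_zero {z : ℂ} (hz : ∀ k : ℕ, z ≠ -k) (n : ℕ) : z + n ≠ 0 :=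
  fun h => hz n (eq_neg_of_add_eq_zero_left h)

lemma ne_neg_natCast_of_re_pos {z : ℂ} (hz : 0 < z.re) (k : ℕ) : z ≠ -k := by
  rintro rfl
  simp only [neg_re, natCast_re, Left.neg_pos_iff] at hz
  linarith [k.cast_nonneg (α := ℝ)]

open Topology

lemma GammaSeq_eq_poch (s : ℂ) (n : ℕ) :
    GammaSeq s n = (n : ℂ) ^ s * n.factorial / (poch s n * (s + n)) := by
  rw [GammaSeq, prod_range_succ]
  rfl

section GaussSummation

variable {a b : ℂ}

lemma sum_range_succ_gauss_term (hc : ∀ k : ℕ, a + b + 1 ≠ -k) (N : ℕ) :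
    ∑ m ∈ range (N + 1), poch a m * poch b m / (m.factorial * poch (a + b + 1) m)
      = poch (a + 1) N * poch (b + 1) N / (N.factorial * poch (a + b + 1) N) := by
  induction N with
  | zero => simp [poch]
  | succ N ih =>
    have := add_natCast_ne_zero hc N
    have := poch_ne_zero hc N
    rw [sum_range_succ, ih, poch_succ_left a, poch_succ_left b, poch_succ_right (a + b + 1),
      poch_succ_right (a + 1), poch_succ_right (b + 1), Nat.factorial_succ]
    push_cast
    field_simp
    ring

lemma tendsto_gauss_partial_sum (ha : ∀ k : ℕ, a + 1 ≠ -k) (hb : ∀ k : ℕ, b + 1 ≠ -k)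
    (hc : ∀ k : ℕ, a + b + 1 ≠ -k) :
    Tendsto (fun N : ℕ => poch (a + 1) N * poch (b + 1) N / (N.factorial * poch (a + b + 1) N))
      atTop (𝓝 (Gamma (a + b + 1) / (Gamma (a + 1) * Gamma (b + 1)))) := by
  have hlim := ((GammaSeq_tendsto_Gamma (a + b + 1)).div
    ((GammaSeq_tendsto_Gamma (a + 1)).mul (GammaSeq_tendsto_Gamma (b + 1)))
    (mul_ne_zero (Gamma_ne_zero ha) (Gamma_ne_zero hb))).mul
    ((tendsto_add_mul_div_add_mul_atTop_nhds 0 (a + 1) 1 one_ne_zero).mul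
      (tendsto_add_mul_div_add_mul_atTop_nhds (a + b + 1) (b + 1) 1 one_ne_zero))
  simp only [zero_add, one_mul, div_one, mul_one, Pi.div_apply] at hlim
  refine hlim.congr' ?_
  filter_upwards [eventually_ne_atTop 0] with N hN
  have hN : (N : ℂ) ≠ 0 := Nat.cast_ne_zero.mpr hN
  have hcpow : (N : ℂ) ^ (a + b + 1) = (N : ℂ) ^ (a + 1) * (N : ℂ) ^ (b + 1) / N := by
    rw [eq_div_iff hN, ← cpow_add _ _ hN]
    calc (N : ℂ) ^ (a + b + 1) * N = (N : ℂ) ^ (a + b + 1 + 1) := by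
          rw [cpow_add (a + b + 1) 1 hN, cpow_one]
      _ = _ := by ring_nf
  have := poch_ne_zero ha N
  have := poch_ne_zero hb N
  have := poch_ne_zero hc N
  have := add_natCast_ne_zero ha N
  have := add_natCast_ne_zero hb N
  have := add_natCast_ne_zero hc N
  have : (N : ℂ) ^ (a + 1) ≠ 0 := by simp [cpow_eq_zero_iff, hN]
  have : (N : ℂ) ^ (b + 1) ≠ 0 := by simp [cpow_eq_zero_iff, hN]
  have : (N.factorial : ℂ) ≠ 0 := Nat.cast_ne_zero.mpr N.factorial_ne_zero
  simp only [GammaSeq_eq_poch, hcpow]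
  field_simp

lemma summable_gauss_term (ha : ∀ k : ℕ, a + 1 ≠ -k) (hb : ∀ k : ℕ, b + 1 ≠ -k)
    (hc : ∀ k : ℕ, a + b + 1 ≠ -k) :
    Summable fun m : ℕ => poch a m * poch b m / (m.factorial * poch (a + b + 1) m) := by
  set P := fun N : ℕ => poch (a + 1) N * poch (b + 1) N / (N.factorial * poch (a + b + 1) N)
  have hstep : ∀ m : ℕ, poch a (m + 1) * poch b (m + 1)
      / ((m + 1).factorial * poch (a + b + 1) (m + 1))
      = P m * (a * b) * ((1 + m) / (a + b + 1 + m)) * (((m : ℂ) + 1) ^ 2)⁻¹ := by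
    intro m
    have := add_natCast_ne_zero hc m
    have := poch_ne_zero hc m
    have : (m : ℂ) + 1 ≠ 0 := by exact_mod_cast m.succ_ne_zero
    simp only [P]
    rw [poch_succ_left a, poch_succ_left b, poch_succ_right (a + b + 1), Nat.factorial_succ]
    push_cast
    field_simp
    ring
  have hbound := ((((tendsto_gauss_partial_sum ha hb hc).mul_const (a * b)).mul
    (tendsto_add_mul_div_add_mul_atTop_nhds 1 (a + b + 1) 1 one_ne_zero)).isBigO_one ℂ).mul
    (Asymptotics.isBigO_refl (fun m : ℕ => (((m : ℂ) + 1) ^ 2)⁻¹) atTop)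
  simp only [one_mul] at hbound
  rw [← summable_nat_add_iff 1]
  refine summable_of_isBigO_nat ?_ (hbound.norm_right.congr_left fun m => (hstep m).symm)
  have := (summable_nat_add_iff 1).mpr (Real.summable_nat_pow_inv.mpr one_lt_two)
  simpa only [one_mul, norm_inv, norm_pow, ← Nat.cast_succ, norm_natCast] using this

lemma hypF_add_add_one_one (ha : ∀ k : ℕ, a + 1 ≠ -k) (hb : ∀ k : ℕ, b + 1 ≠ -k)
    (hc : ∀ k : ℕ, a + b + 1 ≠ -k) :
    hypF a b (a + b + 1) 1 = Gamma (a + b + 1) / (Gamma (a + 1) * Gamma (b + 1)) := by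
  simp only [hypF, one_pow, mul_one]
  refine ((summable_gauss_term ha hb hc).hasSum_iff_tendsto_nat.mpr ?_).tsum_eq
  rw [← tendsto_add_atTop_iff_nat 1]
  simpa only [sum_range_succ_gauss_term hc] using tendsto_gauss_partial_sum ha hb hc

end GaussSummation

lemma summand_eq_Gamma_mul_gauss_term {x y : ℂ} (hrex : x.re < 0) (hrey1 : y.re < 1) (m : ℕ) :
    poch (-y / 2) m * poch ((1 - x - y) / 2) m / ((m.factorial : ℂ) * poch ((1 - x) / 2) m)
        * (Gamma (2 * (m : ℂ) - x) * Gamma (1 - y) / Gamma (2 * (m : ℂ) + 1 - x - y))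
      = Gamma (-x) * Gamma (1 - y) / Gamma (1 - x - y)
        * (poch (-y / 2) m * poch (-x / 2) m / (m.factorial * poch (1 - (x + y) / 2) m)) := by
  have hx : 0 < (-x).re := by simp only [neg_re]; linarith
  have hxy : 0 < (1 - x - y).re := by simp only [sub_re, one_re]; linarith
  have hx' : 0 < ((1 - x) / 2).re := by simp only [div_ofNat_re, sub_re, one_re]; linarith
  have hxy' : 0 < ((1 - x - y) / 2).re := by simp only [div_ofNat_re, sub_re, one_re]; linarith
  have hxy'' : 0 < (1 - (x + y) / 2).re := by
    simp only [sub_re, one_re, div_ofNat_re, add_re]; linarith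
  rw [show 2 * (m : ℂ) - x = -x + 2 * m by ring,
    Gamma_add_two_mul_nat (ne_neg_natCast_of_re_pos hx),
    show 2 * (m : ℂ) + 1 - x - y = 1 - x - y + 2 * m by ring,
    Gamma_add_two_mul_nat (ne_neg_natCast_of_re_pos hxy),
    show (-x + 1) / 2 = (1 - x) / 2 by ring, show (1 - x - y + 1) / 2 = 1 - (x + y) / 2 by ring]
  have := poch_ne_zero (ne_neg_natCast_of_re_pos hx') m
  have := poch_ne_zero (ne_neg_natCast_of_re_pos hxy') m
  have := poch_ne_zero (ne_neg_natCast_of_re_pos hxy'') m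
  have := Gamma_ne_zero_of_re_pos hxy
  have : (m.factorial : ℂ) ≠ 0 := Nat.cast_ne_zero.mpr m.factorial_ne_zero
  field_simp

theorem gamma_series_evaluation_general (x y : ℂ) (hrex : x.re < 0)
    (hrey1 : y.re < 1) :
    (-x * ∑' m : ℕ,
        (poch (-y / 2) m * poch ((1 - x - y) / 2) m
            / ((m.factorial : ℂ) * poch ((1 - x) / 2) m))
          * (Complex.Gamma (2 * (m : ℂ) - x) * Complex.Gamma (1 - y)
              / Complex.Gamma (2 * (m : ℂ) + 1 - x - y))
      = Complex.Gamma (1 - x) * Complex.Gamma (1 - y) / Complex.Gamma (1 - x - y)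
          * ∑' m : ℕ, poch (-y / 2) m * poch (-x / 2) m
              / ((m.factorial : ℂ) * poch (1 - (x + y) / 2) m)) ∧
    -x * ∑' m : ℕ,
        (poch (-y / 2) m * poch ((1 - x - y) / 2) m
            / ((m.factorial : ℂ) * poch ((1 - x) / 2) m))
          * (Complex.Gamma (2 * (m : ℂ) - x) * Complex.Gamma (1 - y)
              / Complex.Gamma (2 * (m : ℂ) + 1 - x - y))
      = Complex.Gamma (1 - x) * Complex.Gamma (1 - y) / Complex.Gamma (1 - x - y)
          * (Complex.Gamma (1 - (x + y) / 2)
              / (Complex.Gamma (1 - x / 2) * Complex.Gamma (1 - y / 2))) := by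
  have hx : -x ≠ 0 := neg_ne_zero.mpr fun h => by simp [h] at hrex
  have hre : ∀ z : ℂ, z.re ≤ 1 → 0 < (-z / 2 + 1).re := fun z hz => by
    simp only [add_re, div_ofNat_re, neg_re, one_re]; linarith
  have hgauss := hypF_add_add_one_one (ne_neg_natCast_of_re_pos (hre y hrey1.le))
    (ne_neg_natCast_of_re_pos (hre x (by linarith)))
    (ne_neg_natCast_of_re_pos (by simp only [add_re, div_ofNat_re, neg_re, one_re]; linarith))
  simp only [hypF, one_pow, mul_one, show -y / 2 + -x / 2 + 1 = 1 - (x + y) / 2 by ring,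
    show -y / 2 + 1 = 1 - y / 2 by ring, show -x / 2 + 1 = 1 - x / 2 by ring] at hgauss
  have hGamma : Gamma (1 - x) = -x * Gamma (-x) := by rw [← Gamma_add_one _ hx, neg_add_eq_sub]
  rw [tsum_congr (summand_eq_Gamma_mul_gauss_term hrex hrey1), tsum_mul_left, hgauss, hGamma]
  constructor <;> ring

/-- The Gamma-function evaluation of the limit series, via the Gauss summation formula. -/
theorem gamma_series_evaluation (x y : ℂ) (hrex : x.re < 0)
    (hrey0 : 0 < y.re) (hrey1 : y.re < 1) :
    (-x * ∑' m : ℕ,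
        (poch (-y / 2) m * poch ((1 - x - y) / 2) m
            / ((m.factorial : ℂ) * poch ((1 - x) / 2) m))
          * (Complex.Gamma (2 * (m : ℂ) - x) * Complex.Gamma (1 - y)
              / Complex.Gamma (2 * (m : ℂ) + 1 - x - y))
      = Complex.Gamma (1 - x) * Complex.Gamma (1 - y) / Complex.Gamma (1 - x - y)
          * ∑' m : ℕ, poch (-y / 2) m * poch (-x / 2) m
              / ((m.factorial : ℂ) * poch (1 - (x + y) / 2) m)) ∧
    -x * ∑' m : ℕ,
        (poch (-y / 2) m * poch ((1 - x - y) / 2) m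
            / ((m.factorial : ℂ) * poch ((1 - x) / 2) m))
          * (Complex.Gamma (2 * (m : ℂ) - x) * Complex.Gamma (1 - y)
              / Complex.Gamma (2 * (m : ℂ) + 1 - x - y))
      = Complex.Gamma (1 - x) * Complex.Gamma (1 - y) / Complex.Gamma (1 - x - y)
          * (Complex.Gamma (1 - (x + y) / 2)
              / (Complex.Gamma (1 - x / 2) * Complex.Gamma (1 - y / 2))) :=
  gamma_series_evaluation_general x y hrex hrey1

end
end

section
/- For every index 𝐤 = (k₁, …, kₙ) of depth n ≥ 1 and every complex t with |t| ≤ 1/2, one has |Ath(𝐤; t)| ≤ T(k₁, …, k_{n−1}, kₙ+1) ≤ T(1, …, 1, 2) (n−1 ones followed by 2). Consequently, for all k, n ≥ 1, s ≥ 0 and |t| ≤ 1/2, |G(k,n,s;t)| ≤ 2^{n+1} · C(k−1, n−1), where C denotes the binomial coefficient. -/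
open Complex Filter Metric Finset

attribute [local instance] Classical.propDecidable

noncomputable section

/-!
For `‖t‖ ≤ 1/2` and `m ≥ 1` one has `‖t‖ ^ m ≤ 2⁻ᵐ ≤ 1/m`, so the terms of `Ath(𝐤; t)` are
dominated by those of `T(k₁, …, kₙ + 1)`. That series converges because, the geometric mean of
`m₁ < ⋯ < mₙ` being at most `mₙ`, its terms are at most `(m₁⋯mₙ)^(-1-1/n)`; and `T` decreases
when the index grows.

For `G`, every `|Ath(𝐤; t)|` is at most `Σ 2^(-mₙ)` over all increasing positive sequences, and this
sum is `1`: summing out the last entry `M > L` leaves the geometric tail `Σ_{M > L} 2⁻ᴹ = 2⁻ᴸ`.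
By stars and bars there are at most `C(k-1, n-1)` indices of weight `k` and depth `n`.
-/

open scoped ENNReal

def athTerm {n : ℕ} (k : Fin n → ℕ) (t : ℂ) (m : Fin n → ℕ) : ℂ :=
  if athCond n m then t ^ lastExp m / ∏ i, ((m i : ℂ) ^ k i) else 0

def tvalTerm {n : ℕ} (c : Fin n → ℕ) (m : Fin n → ℕ) : ℝ :=
  if athCond n m then (∏ i, ((m i : ℝ) ^ c i))⁻¹ else 0

theorem Tval_eq_tsum {n : ℕ} (c : Fin n → ℕ) : Tval c = 2 ^ n * ∑' m, tvalTerm c m := rfl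

theorem lastExp_eq_last {n : ℕ} (m : Fin (n + 1) → ℕ) : lastExp m = m (Fin.last n) := by
  simp [lastExp, Fin.last]

theorem le_lastExp_of_monotone {n : ℕ} {m : Fin n → ℕ} (hm : Monotone m) (i : Fin n) :
    m i ≤ lastExp m := by
  obtain _ | n := n
  · exact i.elim0
  · exact lastExp_eq_last m ▸ hm (Fin.le_last i)

theorem one_le_of_athCond {n : ℕ} {m : Fin n → ℕ} (hm : athCond n m) (i : Fin n) :
    1 ≤ (m i : ℝ) := by
  exact_mod_cast (hm.2 i).2

theorem one_le_prod_pow_of_athCond {n : ℕ} (k : Fin n → ℕ) {m : Fin n → ℕ} (hm : athCond n m) :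
    1 ≤ ∏ i, (m i : ℝ) ^ k i :=
  one_le_prod fun i _ => one_le_pow₀ (one_le_of_athCond hm i)

theorem norm_athTerm {n : ℕ} (k : Fin n → ℕ) (t : ℂ) {m : Fin n → ℕ} (hm : athCond n m) :
    ‖athTerm k t m‖ = ‖t‖ ^ lastExp m / ∏ i, (m i : ℝ) ^ k i := by
  simp [athTerm, hm, norm_prod]

theorem summable_pi_prod_of_nonneg {ι : Type*} {f : ι → ℝ} (hf : Summable f) (h0 : 0 ≤ f)
    (n : ℕ) : Summable fun m : Fin n → ι => ∏ i, f (m i) := by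
  induction n with
  | zero => exact .of_finite
  | succ n ih =>
    refine (Fin.consEquiv fun _ => ι).summable_iff.1 ?_
    simpa [Function.comp_def, Fin.prod_univ_succ] using
      hf.mul_of_nonneg ih h0 fun m => prod_nonneg fun i _ => h0 (m i)

theorem Real.prod_rpow_inv_card_le {ι : Type*} [Fintype ι] [Nonempty ι] {x : ι → ℝ}
    (hx : ∀ i, 0 ≤ x i) {X : ℝ} (hX : ∀ i, x i ≤ X) :
    (∏ i, x i) ^ ((Fintype.card ι : ℝ)⁻¹) ≤ X := by
  have hX0 : 0 ≤ X := (hx (Classical.arbitrary ι)).trans (hX _)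
  calc (∏ i, x i) ^ ((Fintype.card ι : ℝ)⁻¹)
      ≤ (X ^ Fintype.card ι) ^ ((Fintype.card ι : ℝ)⁻¹) := by
        gcongr
        · exact prod_nonneg fun i _ => hx i
        · exact (prod_le_prod (fun i _ => hx i) fun i _ => hX i).trans_eq
            (by rw [prod_const, card_univ])
    _ = X := Real.pow_rpow_inv_natCast hX0 Fintype.card_ne_zero

theorem prod_mul_last_le_prod_pow {n : ℕ} {x : Fin (n + 1) → ℝ} (hx : ∀ i, 1 ≤ x i)
    {c : Fin (n + 1) → ℕ} (hc : ∀ i, 1 ≤ c i) (hlast : 2 ≤ c (Fin.last n)) :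
    (∏ i, x i) * x (Fin.last n) ≤ ∏ i, x i ^ c i := by
  rw [Fin.prod_univ_castSucc, Fin.prod_univ_castSucc, mul_assoc, ← sq]
  have h0 (i) : 0 ≤ x i := zero_le_one.trans (hx i)
  refine mul_le_mul ?_ (pow_le_pow_right₀ (hx _) hlast) (by positivity)
    (prod_nonneg fun i _ => pow_nonneg (h0 _) _)
  exact prod_le_prod (fun i _ => h0 _) fun i _ =>
    le_self_pow₀ (hx _) (by have := hc (Fin.castSucc i); omega)

theorem tvalTerm_nonneg {n : ℕ} (c m : Fin n → ℕ) : 0 ≤ tvalTerm c m := by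
  unfold tvalTerm; split_ifs <;> positivity

theorem tvalTerm_le_prod_rpow {n : ℕ} {c : Fin (n + 1) → ℕ} (hc : ∀ i, 1 ≤ c i)
    (hlast : 2 ≤ c (Fin.last n)) (m : Fin (n + 1) → ℕ) :
    tvalTerm c m ≤ ∏ i, (m i : ℝ) ^ (-(1 + ((n + 1 : ℕ) : ℝ)⁻¹)) := by
  by_cases hm : athCond (n + 1) m
  · have hm1 := one_le_of_athCond hm
    set P := ∏ i, (m i : ℝ)
    have hP : 0 < P := prod_pos fun i _ => zero_lt_one.trans_le (hm1 i)
    rw [tvalTerm, if_pos hm, Real.finsetProd_rpow _ _ fun i _ => Nat.cast_nonneg _,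
      Real.rpow_neg hP.le]
    refine inv_anti₀ (by positivity) ?_
    calc P ^ (1 + ((n + 1 : ℕ) : ℝ)⁻¹) = P * P ^ (((n + 1 : ℕ) : ℝ)⁻¹) := by
          rw [Real.rpow_add hP, Real.rpow_one]
      _ ≤ P * m (Fin.last n) := by
          gcongr
          simpa using Real.prod_rpow_inv_card_le (fun i => Nat.cast_nonneg (m i))
            fun i => Nat.cast_le.2 (hm.1.monotone (Fin.le_last i))
      _ ≤ ∏ i, (m i : ℝ) ^ c i := prod_mul_last_le_prod_pow hm1 hc hlast
  · rw [tvalTerm, if_neg hm]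
    exact prod_nonneg fun i _ => Real.rpow_nonneg (Nat.cast_nonneg _) _

theorem summable_tvalTerm {n : ℕ} {c : Fin (n + 1) → ℕ} (hc : ∀ i, 1 ≤ c i)
    (hlast : 2 ≤ c (Fin.last n)) : Summable (tvalTerm c) := by
  refine .of_nonneg_of_le (tvalTerm_nonneg c) (tvalTerm_le_prod_rpow hc hlast) ?_
  refine summable_pi_prod_of_nonneg (Real.summable_nat_rpow.2 ?_)
    (fun x => Real.rpow_nonneg (Nat.cast_nonneg x) _) _
  have : (0 : ℝ) < ((n + 1 : ℕ) : ℝ)⁻¹ := by positivity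
  linarith

theorem tvalTerm_anti {n : ℕ} {c c' : Fin n → ℕ} (hle : c ≤ c') (m : Fin n → ℕ) :
    tvalTerm c' m ≤ tvalTerm c m := by
  by_cases hm : athCond n m
  · have hm1 := one_le_of_athCond hm
    simp only [tvalTerm, if_pos hm]
    exact inv_anti₀ (prod_pos fun i _ => pow_pos (zero_lt_one.trans_le (hm1 i)) _)
      (prod_le_prod (fun i _ => by positivity) fun i _ => pow_le_pow_right₀ (hm1 i) (hle i))
  · simp [tvalTerm, hm]

theorem Tval_le_Tval_of_le {n : ℕ} {c c' : Fin (n + 1) → ℕ} (hc : ∀ i, 1 ≤ c i)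
    (hlast : 2 ≤ c (Fin.last n)) (hle : c ≤ c') : Tval c' ≤ Tval c := by
  rw [Tval_eq_tsum, Tval_eq_tsum]
  refine mul_le_mul_of_nonneg_left ?_ (by positivity)
  exact Summable.tsum_le_tsum (tvalTerm_anti hle)
    (summable_tvalTerm (fun i => (hc i).trans (hle i)) (hlast.trans (hle _)))
    (summable_tvalTerm hc hlast)

theorem prod_pow_update_last {M : Type*} [CommMonoid M] {n : ℕ} (x : Fin (n + 1) → M)
    (c : Fin (n + 1) → ℕ) :
    ∏ i, x i ^ Function.update c (Fin.last n) (c (Fin.last n) + 1) i =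
      (∏ i, x i ^ c i) * x (Fin.last n) := by
  simp [Fin.prod_univ_castSucc, pow_succ, mul_assoc]

theorem norm_athTerm_le_tvalTerm {n : ℕ} (k : Fin (n + 1) → ℕ) {t : ℂ} (ht : ‖t‖ ≤ 1 / 2)
    (m : Fin (n + 1) → ℕ) :
    ‖athTerm k t m‖ ≤ tvalTerm (Function.update k (Fin.last n) (k (Fin.last n) + 1)) m := by
  by_cases hm : athCond (n + 1) m
  · rw [norm_athTerm k t hm, tvalTerm, if_pos hm, prod_pow_update_last, mul_inv, lastExp_eq_last,
      div_eq_inv_mul]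
    gcongr
    calc ‖t‖ ^ m (Fin.last n) ≤ (1 / 2) ^ m (Fin.last n) := by gcongr
      _ ≤ (m (Fin.last n) : ℝ)⁻¹ := by
        rw [one_div, inv_pow]
        exact inv_anti₀ (zero_lt_one.trans_le (one_le_of_athCond hm _))
          (by exact_mod_cast Nat.lt_two_pow_self.le)
  · simp [athTerm, tvalTerm, hm]

theorem norm_Ath_le_Tval {n : ℕ} {k : Fin (n + 1) → ℕ} (hk : ∀ i, 1 ≤ k i) {t : ℂ}
    (ht : ‖t‖ ≤ 1 / 2) :
    ‖Ath k t‖ ≤ Tval (Function.update k (Fin.last n) (k (Fin.last n) + 1)) := by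
  set k' := Function.update k (Fin.last n) (k (Fin.last n) + 1)
  have hk' (i) : 1 ≤ k' i := by
    rcases eq_or_ne i (Fin.last n) with rfl | hi
    · simp [k']
    · simpa [k', hi] using hk i
  have hlast : 2 ≤ k' (Fin.last n) := by simpa [k'] using hk (Fin.last n)
  calc ‖Ath k t‖ ≤ ∑' m, tvalTerm k' m :=
        tsum_of_norm_bounded (summable_tvalTerm hk' hlast).hasSum (norm_athTerm_le_tvalTerm k ht)
    _ ≤ Tval k' := by
        rw [Tval_eq_tsum]
        exact le_mul_of_one_le_left (tsum_nonneg (tvalTerm_nonneg k')) (one_le_pow₀ one_le_two)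

theorem strictMono_snoc_and_pos_iff {n : ℕ} (m : Fin n → ℕ) (M : ℕ) :
    (StrictMono (Fin.snoc m M : Fin (n + 1) → ℕ) ∧ ∀ i, 0 < (Fin.snoc m M : Fin (n + 1) → ℕ) i) ↔
      (StrictMono m ∧ ∀ i, 0 < m i) ∧ lastExp m < M := by
  -- for `n = 0` the junk value `lastExp m = 0` turns the last condition into `0 < M`
  constructor
  · rintro ⟨hmono, hpos⟩
    refine ⟨⟨fun i j hij => by simpa using hmono (Fin.castSucc_lt_castSucc_iff.2 hij),
      fun i => by simpa using hpos i.castSucc⟩, ?_⟩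
    obtain _ | n := n
    · simpa [lastExp] using (Fin.snoc_last (α := fun _ => ℕ) M m) ▸ hpos (Fin.last 0)
    · simpa [lastExp_eq_last] using hmono (Fin.castSucc_lt_last (Fin.last n))
  · rintro ⟨⟨hmono, hpos⟩, hM⟩
    have hlt (i : Fin n) : m i < M := (le_lastExp_of_monotone hmono.monotone i).trans_lt hM
    refine ⟨fun i j hij => ?_, fun i => ?_⟩
    · induction j using Fin.lastCases with
      | last =>
        obtain ⟨i, rfl⟩ := Fin.exists_castSucc_eq.2 hij.ne
        simpa using hlt i
      | cast j =>
        induction i using Fin.lastCases with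
        | last => exact absurd hij (Fin.castSucc_lt_last j).not_gt
        | cast i => simpa using hmono (Fin.castSucc_lt_castSucc_iff.1 hij)
    · induction i using Fin.lastCases with
      | last => simpa using (Nat.zero_le _).trans_lt hM
      | cast i => simpa using hpos i

theorem ENNReal.tsum_ite_lt_pow (r : ℝ≥0∞) (L : ℕ) :
    ∑' M : ℕ, (if L < M then r ^ M else 0) = r ^ L * (r * (1 - r)⁻¹) := by
  rw [← (add_left_injective (L + 1)).tsum_eq]
  · simp only [show ∀ j, L < j + (L + 1) by omega, if_true, pow_add, ENNReal.tsum_mul_right,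
      ENNReal.tsum_geometric]
    ring
  · intro M hM
    simp only [Function.mem_support, ne_eq, ite_eq_right_iff, Classical.not_imp] at hM
    exact ⟨M - (L + 1), by simp; omega⟩

theorem tsum_strictMono_pos_pow_lastExp (r : ℝ≥0∞) (n : ℕ) :
    ∑' m : Fin n → ℕ, (if StrictMono m ∧ ∀ i, 0 < m i then r ^ lastExp m else 0) =
      (r * (1 - r)⁻¹) ^ n := by
  induction n with
  | zero => simp [lastExp, Subsingleton.strictMono]
  | succ n ih =>
    rw [← (Fin.snocEquiv fun _ => ℕ).tsum_eq, ENNReal.tsum_prod', ENNReal.tsum_comm, pow_succ, ← ih,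
      ← ENNReal.tsum_mul_right]
    refine tsum_congr fun m => ?_
    simp only [Fin.snocEquiv, Equiv.coe_fn_mk, strictMono_snoc_and_pos_iff, lastExp_eq_last,
      Fin.snoc_last]
    by_cases hm : StrictMono m ∧ ∀ i, 0 < m i
    · rw [if_pos hm, ← ENNReal.tsum_ite_lt_pow]
      simp only [and_iff_right hm]
    · simp [hm]

theorem norm_Ath_le_one {n : ℕ} (k : Fin n → ℕ) {t : ℂ} (ht : ‖t‖ ≤ 1 / 2) : ‖Ath k t‖ ≤ 1 := by
  set B : (Fin n → ℕ) → ℝ≥0∞ := fun m =>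
    if StrictMono m ∧ ∀ i, 0 < m i then 2⁻¹ ^ lastExp m else 0
  have hB : ∑' m, B m = 1 := by
    simp only [B, tsum_strictMono_pos_pow_lastExp, ENNReal.one_sub_inv_two, inv_inv,
      ENNReal.inv_mul_cancel two_ne_zero ENNReal.ofNat_ne_top, one_pow]
  have hBsum := ENNReal.hasSum_toReal (f := B) (by simp [hB])
  rw [← ENNReal.tsum_toReal_eq fun m => by unfold B; split_ifs <;> simp, hB,
    ENNReal.toReal_one] at hBsum
  refine tsum_of_norm_bounded (f := athTerm k t) hBsum fun m => ?_
  by_cases hm : athCond n m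
  · simp only [B, if_pos (And.intro hm.1 fun i => (hm.2 i).2), norm_athTerm k t hm]
    calc ‖t‖ ^ lastExp m / ∏ i, (m i : ℝ) ^ k i
        ≤ ‖t‖ ^ lastExp m := div_le_self (by positivity) (one_le_prod_pow_of_athCond k hm)
      _ ≤ (1 / 2) ^ lastExp m := by gcongr
      _ = (2⁻¹ ^ lastExp m : ℝ≥0∞).toReal := by simp
  · simp [athTerm, hm, B]

theorem Finset.card_piAntidiag_univ_fin (n j : ℕ) :
    #(piAntidiag (univ : Finset (Fin n)) j) = (n + j - 1).choose j := by
  simpa [finsuppAntidiag] using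
    card_finsuppAntidiag_nat_eq_choose (s := (univ : Finset (Fin n))) j

theorem card_compositions_le {n : ℕ} (hn : 0 < n) (k : ℕ) :
    #{κ ∈ piAntidiag (univ : Finset (Fin n)) k | ∀ i, 1 ≤ κ i} ≤ (k - 1).choose (n - 1) := by
  rcases lt_or_ge k n with hkn | hnk
  · refine (card_eq_zero.2 (filter_eq_empty_iff.2 fun κ hκ hpos => ?_)).trans_le (Nat.zero_le _)
    have : n ≤ ∑ i, κ i := by simpa using Finset.card_nsmul_le_sum univ κ 1 fun i _ => hpos i
    rw [(mem_piAntidiag.1 hκ).1] at this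
    omega
  calc _ ≤ #(piAntidiag (univ : Finset (Fin n)) (k - n)) := by
        refine card_le_card_of_injOn (fun κ i => κ i - 1) (fun κ hκ => ?_) fun κ hκ κ' hκ' h => ?_
        · simp only [coe_filter, mem_piAntidiag, mem_univ, Set.mem_ofPred_eq] at hκ
          simp only [mem_coe, mem_piAntidiag, mem_univ, implies_true, and_true]
          rw [sum_tsub_distrib _ fun i _ => hκ.2 i]
          simp [hκ.1.1]
        · simp only [coe_filter, mem_piAntidiag, mem_univ, Set.mem_ofPred_eq] at hκ hκ'
          funext i
          have := congrFun h i
          dsimp only at this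
          have := hκ.2 i
          have := hκ'.2 i
          omega
    _ = (k - 1).choose (n - 1) := by
        rw [card_piAntidiag_univ_fin, Nat.add_sub_cancel' hnk]
        exact Nat.choose_symm_of_eq_add (by omega)

theorem norm_G_le {k n : ℕ} (hn : 0 < n) (s : ℕ) {t : ℂ} (ht : ‖t‖ ≤ 1 / 2) :
    ‖G k n s t‖ ≤ 2 ^ n * (k - 1).choose (n - 1) := by
  set C := {κ ∈ piAntidiag (univ : Finset (Fin n)) k | ∀ i, 1 ≤ κ i}
  have hsupp (κ) (hκ : κ ∉ C) : (if IdxCond k n s κ then Ath κ t else 0) = 0 := by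
    refine if_neg fun h => hκ ?_
    simp [C, h.1, h.2.1]
  rw [G, tsum_eq_sum hsupp, norm_mul, norm_pow, Complex.norm_ofNat]
  refine mul_le_mul_of_nonneg_left ?_ (by positivity)
  calc ‖∑ κ ∈ C, if IdxCond k n s κ then Ath κ t else 0‖
      ≤ ∑ κ ∈ C, (1 : ℝ) := norm_sum_le_of_le C fun κ _ => by
        split_ifs
        · exact norm_Ath_le_one κ ht
        · simp
    _ ≤ (k - 1).choose (n - 1) := by
        simpa using (Nat.cast_le (α := ℝ)).2 (card_compositions_le hn k)

/-- Bounds on `|t| ≤ 1/2`: `|Ath(𝐤;t)| ≤ T(k₁,…,kₙ+1) ≤ T(1,…,1,2)`, and consequently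
`|G(k,n,s;t)| ≤ 2^{n+1} C(k−1,n−1)`. -/
theorem ath_and_G_bounds :
    (∀ (n : ℕ) (hn : 0 < n) (k : Fin n → ℕ), (∀ i, 1 ≤ k i) → ∀ t : ℂ, ‖t‖ ≤ 1 / 2 →
      ‖Ath k t‖ ≤ Tval (Function.update k ⟨n - 1, Nat.sub_lt hn Nat.one_pos⟩
          (k ⟨n - 1, Nat.sub_lt hn Nat.one_pos⟩ + 1)) ∧
      Tval (Function.update k ⟨n - 1, Nat.sub_lt hn Nat.one_pos⟩
          (k ⟨n - 1, Nat.sub_lt hn Nat.one_pos⟩ + 1))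
        ≤ Tval (fun i : Fin n => if (i : ℕ) = n - 1 then 2 else 1)) ∧
    (∀ k n s : ℕ, 1 ≤ k → 1 ≤ n → ∀ t : ℂ, ‖t‖ ≤ 1 / 2 →
      ‖G k n s t‖ ≤ 2 ^ (n + 1) * ((k - 1).choose (n - 1))) := by
  refine ⟨fun n hn k hk t ht => ?_, fun k n s _ hn t ht => ?_⟩
  · obtain ⟨n, rfl⟩ := Nat.exists_eq_add_one.2 hn
    change ‖Ath k t‖ ≤ Tval (Function.update k (Fin.last n) (k (Fin.last n) + 1)) ∧
      Tval (Function.update k (Fin.last n) (k (Fin.last n) + 1)) ≤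
        Tval (fun i : Fin (n + 1) => if (i : ℕ) = n then 2 else 1)
    refine ⟨norm_Ath_le_Tval hk ht, Tval_le_Tval_of_le (fun i => by split_ifs <;> omega) (by simp)
      fun i => ?_⟩
    rcases eq_or_ne i (Fin.last n) with rfl | hi
    · simpa using hk (Fin.last n)
    · have hin : (i : ℕ) ≠ n := Fin.val_ne_iff.2 hi
      simpa [hi, hin] using hk i
  · calc ‖G k n s t‖ ≤ 2 ^ n * (k - 1).choose (n - 1) := norm_G_le hn s ht
      _ ≤ 2 ^ (n + 1) * (k - 1).choose (n - 1) := by gcongr <;> norm_num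

end
end
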